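/- arXiv:2602.16115 — 4 statements merged into one kernel-verified Lean document; each statement's English description precedes it below -/
import Mathlib

section
/- The function λ defined by λ(k) = (μ(k²))² is continuous on [1,∞). -/
/-- The function `z r x` from Morikawa's problem, with `Real.sqrt` extended by `0`
on negative inputs. -/
noncomputable def z (r x : ℝ) : ℝ :=
  Real.sqrt (x ^ 2 +
    (r - x - Real.sqrt (r ^ 2 -
      (2 * Real.sqrt r - x - Real.sqrt (2 * x - x ^ 2)) ^ 2)) ^ 2)

/-- The Morikawa function `μ(r) = inf { z_r(x) : x ∈ [1 − 1/√2, 1] }`. -/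
noncomputable def mu (r : ℝ) : ℝ :=
  sInf (z r '' Set.Icc (1 - 1 / Real.sqrt 2) 1)

/-- The auxiliary function `λ(k) = (μ(k²))²`. -/
noncomputable def lam (k : ℝ) : ℝ := (mu (k ^ 2)) ^ 2

lemma z_continuous : Continuous ↿z := by
  unfold z Function.HasUncurry.uncurry
  fun_prop

lemma mu_continuous : Continuous mu := by
  have := IsCompact.continuous_sInf (f := z)
    (K := Set.Icc (1 - 1 / Real.sqrt 2) 1) isCompact_Icc z_continuous
  exact this

theorem morikawa_lam_continuous : ContinuousOn lam (Set.Ici (1 : ℝ)) := by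
  have : Continuous lam := by
    unfold lam
    exact ((mu_continuous.comp (continuous_pow 2)).pow 2)
  exact this.continuousOn
end

section
/- For every r ≥ 1 and every x ∈ [1 − 1/√2, 1], the expressions under the square roots in the definition of z_r are nonnegative: 2x − x² ≥ 0 and r² − (2√r − x − √(2x − x²))² ≥ 0. -/
theorem morikawa_radicands_nonneg :
    ∀ r : ℝ, 1 ≤ r → ∀ x ∈ Set.Icc (1 - 1 / Real.sqrt 2) (1 : ℝ),
      0 ≤ 2 * x - x ^ 2 ∧
      0 ≤ r ^ 2 - (2 * Real.sqrt r - x - Real.sqrt (2 * x - x ^ 2)) ^ 2 := by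
  intro r hr x hx
  obtain ⟨hx1, hx2⟩ := hx
  have h2 : (0:ℝ) < Real.sqrt 2 := Real.sqrt_pos.mpr (by norm_num)
  have h2sq : Real.sqrt 2 ^ 2 = 2 := Real.sq_sqrt (by norm_num)
  have h21 : (1:ℝ) ≤ Real.sqrt 2 := by nlinarith
  have hx0 : 0 ≤ x := by
    have : 1 / Real.sqrt 2 ≤ 1 := by
      rw [div_le_one h2]; exact h21
    linarith
  have hrad : 0 ≤ 2 * x - x ^ 2 := by nlinarith
  refine ⟨hrad, ?_⟩
  set t := Real.sqrt (2 * x - x ^ 2) with ht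
  have ht0 : 0 ≤ t := Real.sqrt_nonneg _
  have ht2 : t ^ 2 = 2 * x - x ^ 2 := Real.sq_sqrt hrad
  have ht1 : t ≤ 1 := by nlinarith
  have hxsq : (1 - x) ^ 2 ≤ 1 / 2 := by
    have h1x : 1 - x ≤ 1 / Real.sqrt 2 := by linarith
    have : (1 / Real.sqrt 2) ^ 2 = 1 / 2 := by
      rw [div_pow, h2sq]; norm_num
    nlinarith
  have htge : 1 - x ≤ t := by nlinarith
  set s := Real.sqrt r with hs
  have hs2 : s ^ 2 = r := Real.sq_sqrt (by linarith)
  have hs1 : 1 ≤ s := by nlinarith [Real.sqrt_nonneg r]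
  have hub : 0 ≤ r - (2 * s - x - t) := by nlinarith [sq_nonneg (s - 1)]
  have hlb : 0 ≤ r + (2 * s - x - t) := by nlinarith
  nlinarith [mul_nonneg hub hlb]
end

section
/- Let F ∈ (ℝ[t])[y] be a polynomial in y with polynomial coefficients in t, let h : ℝ → ℝ be analytic at 0 with F(0, h(0)) = 0 and ∂F/∂y(0, h(0)) ≠ 0, and suppose there exists ε > 0 such that F(t, h(t)) = 0 for all t ∈ [0, ε). Then the formal Taylor series g ∈ ℝ[[t]] of h at 0 satisfies F(t, g(t)) = 0 in the power series ring ℝ[[t]], and g is the unique power series with constant term h(0) and this property. -/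
/-- Evaluation of `F ∈ (ℝ[t])[y]` at a point `(t, y) ∈ ℝ²`. -/
noncomputable def evalTY (F : Polynomial (Polynomial ℝ)) (t y : ℝ) : ℝ :=
  Polynomial.eval t (Polynomial.eval (Polynomial.C y) F)

/-- Substitution of a formal power series `g ∈ ℝ[[t]]` for `y` in `F ∈ (ℝ[t])[y]`,
with the polynomial coefficients viewed as power series in `t`. -/
noncomputable def substSeries (F : Polynomial (Polynomial ℝ)) (g : PowerSeries ℝ) :
    PowerSeries ℝ :=
  Polynomial.eval₂ Polynomial.coeToPowerSeries.ringHom g F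

/-- The formal Taylor series at `0` of a function `h : ℝ → ℝ`. -/
noncomputable def taylorSeriesAtZero (h : ℝ → ℝ) : PowerSeries ℝ :=
  PowerSeries.mk fun n => iteratedDeriv n h 0 / n.factorial

open PowerSeries Filter Topology
open scoped ContDiff Nat

section TaylorSeries

variable {f g : ℝ → ℝ}

@[simp]
lemma coeff_taylorSeriesAtZero (f : ℝ → ℝ) (n : ℕ) :
    coeff n (taylorSeriesAtZero f) = iteratedDeriv n f 0 / n ! :=
  coeff_mk _ _

lemma constantCoeff_taylorSeriesAtZero (f : ℝ → ℝ) :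
    constantCoeff (taylorSeriesAtZero f) = f 0 := by
  simp [← coeff_zero_eq_constantCoeff_apply]

lemma taylorSeriesAtZero_congr (hfg : f =ᶠ[𝓝 0] g) :
    taylorSeriesAtZero f = taylorSeriesAtZero g := by
  ext n
  simp only [coeff_taylorSeriesAtZero, hfg.iteratedDeriv_eq n]

lemma taylorSeriesAtZero_const (c : ℝ) : taylorSeriesAtZero (fun _ ↦ c) = C c := by
  ext (_ | n) <;> simp [coeff_C, iteratedDeriv_const]

lemma taylorSeriesAtZero_id : taylorSeriesAtZero id = X := by
  ext (_ | _ | n) <;> simp [coeff_X, iteratedDeriv_succ', iteratedDeriv_const]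

lemma taylorSeriesAtZero_add (hf : ContDiffAt ℝ ∞ f 0) (hg : ContDiffAt ℝ ∞ g 0) :
    taylorSeriesAtZero (f + g) = taylorSeriesAtZero f + taylorSeriesAtZero g := by
  ext n
  simp [iteratedDeriv_add (hf.of_le (mod_cast le_top)) (hg.of_le (mod_cast le_top)), add_div]

lemma taylorSeriesAtZero_mul (hf : ContDiffAt ℝ ∞ f 0) (hg : ContDiffAt ℝ ∞ g 0) :
    taylorSeriesAtZero (f * g) = taylorSeriesAtZero f * taylorSeriesAtZero g := by
  ext n
  rw [coeff_mul, Finset.Nat.sum_antidiagonal_eq_sum_range_succ_mk, coeff_taylorSeriesAtZero,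
    iteratedDeriv_mul (hf.of_le (mod_cast le_top)) (hg.of_le (mod_cast le_top)), Finset.sum_div]
  refine Finset.sum_congr rfl fun i hi ↦ ?_
  have hin : i ≤ n := Nat.lt_succ_iff.mp (Finset.mem_range.mp hi)
  rw [coeff_taylorSeriesAtZero, coeff_taylorSeriesAtZero, Nat.choose_eq_factorial_div_factorial hin,
    Nat.cast_div (Nat.factorial_mul_factorial_dvd_factorial hin) (by positivity)]
  field_simp
  push_cast
  ring

lemma taylorSeriesAtZero_eq_zero_of_frequently_eq_zero (hf : AnalyticAt ℝ f 0)
    (hzero : ∃ᶠ t in 𝓝[≠] 0, f t = 0) : taylorSeriesAtZero f = 0 := by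
  rw [taylorSeriesAtZero_congr (hf.frequently_zero_iff_eventually_zero.mp hzero),
    taylorSeriesAtZero_const, map_zero]

end TaylorSeries

def analyticAtZero : Subalgebra ℝ (ℝ → ℝ) where
  carrier := {f | AnalyticAt ℝ f 0}
  mul_mem' := AnalyticAt.mul
  add_mem' := AnalyticAt.add
  algebraMap_mem' _ := analyticAt_const

/-- `Polynomial.aeval coord p` is the polynomial function `t ↦ p.eval t`. -/
def analyticAtZero.coord : analyticAtZero := ⟨id, analyticAt_id⟩

noncomputable def taylorSeriesAtZeroHom : analyticAtZero →+* ℝ⟦X⟧ where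
  toFun f := taylorSeriesAtZero f
  map_one' := taylorSeriesAtZero_const 1
  map_mul' f g := taylorSeriesAtZero_mul f.2.contDiffAt g.2.contDiffAt
  map_zero' := (taylorSeriesAtZero_const 0).trans (map_zero C)
  map_add' f g := taylorSeriesAtZero_add f.2.contDiffAt g.2.contDiffAt

@[simp]
lemma taylorSeriesAtZeroHom_apply (f : analyticAtZero) :
    taylorSeriesAtZeroHom f = taylorSeriesAtZero f :=
  rfl

lemma taylorSeriesAtZeroHom_comp_aeval_coord :
    taylorSeriesAtZeroHom.comp (Polynomial.aeval analyticAtZero.coord).toRingHom =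
      Polynomial.coeToPowerSeries.ringHom := by
  refine Polynomial.ringHom_ext (fun c ↦ ?_) ?_
  · simp only [RingHom.comp_apply, AlgHom.toRingHom_eq_coe, RingHom.coe_coe, Polynomial.aeval_C,
      taylorSeriesAtZeroHom_apply, Polynomial.coeToPowerSeries.ringHom_apply, Polynomial.coe_C]
    exact taylorSeriesAtZero_const c
  · simpa [analyticAtZero.coord] using taylorSeriesAtZero_id

section Substitution

variable {h : ℝ → ℝ}

lemma evalTY_eq_eval₂ (F : Polynomial (Polynomial ℝ)) (t y : ℝ) :
    evalTY F t y = F.eval₂ (Polynomial.evalRingHom t) y := by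
  rw [Polynomial.eval₂_evalRingHom]
  rfl

lemma evalTY_comp_eq_eval₂ (F : Polynomial (Polynomial ℝ)) (u : analyticAtZero) :
    (fun t ↦ evalTY F t ((u : ℝ → ℝ) t)) =
      (F.eval₂ (Polynomial.aeval analyticAtZero.coord).toRingHom u : analyticAtZero) := by
  ext t
  let evalAt : analyticAtZero →+* ℝ := (Pi.evalRingHom _ t).comp analyticAtZero.val.toRingHom
  have hev : evalAt.comp (Polynomial.aeval analyticAtZero.coord).toRingHom =
      Polynomial.evalRingHom t := by
    refine Polynomial.ringHom_ext (fun c ↦ ?_) ?_ <;> simp [evalAt, analyticAtZero.coord]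
  rw [evalTY_eq_eval₂, ← hev]
  exact (Polynomial.hom_eval₂ F _ evalAt u).symm

lemma analyticAt_evalTY_comp (F : Polynomial (Polynomial ℝ)) (hh : AnalyticAt ℝ h 0) :
    AnalyticAt ℝ (fun t ↦ evalTY F t (h t)) 0 := by
  rw [evalTY_comp_eq_eval₂ F ⟨h, hh⟩]
  exact (F.eval₂ (Polynomial.aeval analyticAtZero.coord).toRingHom ⟨h, hh⟩).2

lemma taylorSeriesAtZero_evalTY_comp (F : Polynomial (Polynomial ℝ)) (hh : AnalyticAt ℝ h 0) :
    taylorSeriesAtZero (fun t ↦ evalTY F t (h t)) = substSeries F (taylorSeriesAtZero h) := by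
  rw [evalTY_comp_eq_eval₂ F ⟨h, hh⟩, ← taylorSeriesAtZeroHom_apply, Polynomial.hom_eval₂,
    taylorSeriesAtZeroHom_comp_aeval_coord]
  rfl

lemma substSeries_eq_eval_map (F : Polynomial (Polynomial ℝ)) (g : ℝ⟦X⟧) :
    substSeries F g = (F.map Polynomial.coeToPowerSeries.ringHom).eval g :=
  (Polynomial.eval_map _ _).symm

lemma constantCoeff_substSeries (F : Polynomial (Polynomial ℝ)) (g : ℝ⟦X⟧) :
    constantCoeff (substSeries F g) = evalTY F 0 (constantCoeff g) := by
  rw [substSeries, Polynomial.hom_eval₂, evalTY_eq_eval₂]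
  congr 1
  refine Polynomial.ringHom_ext (fun c ↦ ?_) ?_ <;> simp

lemma eq_of_substSeries_eq_zero {F : Polynomial (Polynomial ℝ)} {g g' : ℝ⟦X⟧}
    (hg : substSeries F g = 0) (hg' : substSeries F g' = 0)
    (hc : constantCoeff g = constantCoeff g')
    (hF' : evalTY (Polynomial.derivative F) 0 (constantCoeff g) ≠ 0) : g = g' := by
  rw [substSeries_eq_eval_map] at hg hg'
  refine IsLocalRing.eq_of_eval_eq_zero_of_not_isUnit_sub hg hg' ?_ ?_
  · rw [isUnit_iff_constantCoeff, map_sub, hc, sub_self]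
    exact not_isUnit_zero
  · rw [Polynomial.derivative_map, ← substSeries_eq_eval_map, isUnit_iff_constantCoeff,
      constantCoeff_substSeries]
    exact hF'.isUnit

end Substitution

theorem taylor_series_root_of_hensel_general
    (F : Polynomial (Polynomial ℝ)) (h : ℝ → ℝ)
    (hh : AnalyticAt ℝ h 0)
    (hFy : evalTY (Polynomial.derivative F) 0 (h 0) ≠ 0)
    (hroot : ∃ ε > (0 : ℝ), ∀ t ∈ Set.Ico (0 : ℝ) ε, evalTY F t (h t) = 0) :
    substSeries F (taylorSeriesAtZero h) = 0 ∧
      ∀ g' : PowerSeries ℝ, PowerSeries.constantCoeff g' = h 0 →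
        substSeries F g' = 0 → g' = taylorSeriesAtZero h := by
  obtain ⟨ε, hε, hroot⟩ := hroot
  have hfreq : ∃ᶠ t in 𝓝[≠] (0 : ℝ), evalTY F t (h t) = 0 := by
    refine (Eventually.frequently (f := 𝓝[>] 0) ?_).filter_mono
      (nhdsWithin_mono 0 fun t ht ↦ ne_of_gt ht)
    filter_upwards [Ioo_mem_nhdsGT hε] with t ht using hroot t ⟨ht.1.le, ht.2⟩
  have hzero : substSeries F (taylorSeriesAtZero h) = 0 := by
    rw [← taylorSeriesAtZero_evalTY_comp F hh]
    exact taylorSeriesAtZero_eq_zero_of_frequently_eq_zero (analyticAt_evalTY_comp F hh) hfreq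
  refine ⟨hzero, fun g' hc hg' ↦ eq_of_substSeries_eq_zero hg' hzero ?_ (by rwa [hc])⟩
  rw [hc, constantCoeff_taylorSeriesAtZero]

theorem taylor_series_root_of_hensel
    (F : Polynomial (Polynomial ℝ)) (h : ℝ → ℝ)
    (hh : AnalyticAt ℝ h 0)
    (hF0 : evalTY F 0 (h 0) = 0)
    (hFy : evalTY (Polynomial.derivative F) 0 (h 0) ≠ 0)
    (hroot : ∃ ε > (0 : ℝ), ∀ t ∈ Set.Ico (0 : ℝ) ε, evalTY F t (h t) = 0) :
    substSeries F (taylorSeriesAtZero h) = 0 ∧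
      ∀ g' : PowerSeries ℝ, PowerSeries.constantCoeff g' = h 0 →
        substSeries F g' = 0 → g' = taylorSeriesAtZero h :=
  taylor_series_root_of_hensel_general F h hh hFy hroot
end

section
/- The real numbers μ(1) and λ(1) = (μ(1))² are algebraic over ℚ. -/
/-!
`μ(1)` is the value of `z 1` at a minimiser `x` on `[1 - 1/√2, 1]`. If `x` is an endpoint it is
algebraic; otherwise the derivative of `(z 1)²` vanishes at `x`, and clearing the two nested square
roots from this equation by squaring twice leaves a nonzero rational polynomial of degree 10 with
root `x`. Algebraic reals are closed under ring operations and square roots, so `z 1 x` is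
algebraic.
-/

open Real Set Polynomial

lemma isAlgebraic_ofNat {R A : Type*} [CommRing R] [Nontrivial R] [Ring A] [Algebra R A] (n : ℕ)
    [n.AtLeastTwo] : IsAlgebraic R (OfNat.ofNat n : A) := by
  exact_mod_cast isAlgebraic_natCast (A := A) n

lemma IsAlgebraic.real_sqrt {R : Type*} [CommRing R] [Algebra R ℝ] {c : ℝ}
    (hc : IsAlgebraic R c) : IsAlgebraic R √c := by
  have := hc.nontrivial
  rcases le_or_gt 0 c with hc0 | hc0
  · exact .of_pow two_pos (by rwa [sq_sqrt hc0])
  · rw [sqrt_eq_zero'.mpr hc0.le]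
    exact isAlgebraic_zero

lemma isAlgebraic_z {R : Type*} [CommRing R] [IsDomain R] [Algebra R ℝ] {r x : ℝ}
    (hr : IsAlgebraic R r) (hx : IsAlgebraic R x) : IsAlgebraic R (z r x) := by
  have h2 : IsAlgebraic R (2 : ℝ) := isAlgebraic_ofNat 2
  have hs : IsAlgebraic R √(2 * x - x ^ 2) := ((h2.mul hx).sub (hx.pow 2)).real_sqrt
  have ht : IsAlgebraic R (2 * √r - x - √(2 * x - x ^ 2)) :=
    ((h2.mul hr.real_sqrt).sub hx).sub hs
  have hu : IsAlgebraic R √(r ^ 2 - (2 * √r - x - √(2 * x - x ^ 2)) ^ 2) :=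
    ((hr.pow 2).sub (ht.pow 2)).real_sqrt
  exact ((hx.pow 2).add (((hr.sub hx).sub hu).pow 2)).real_sqrt

lemma continuous_z (r : ℝ) : Continuous (z r) := by
  unfold z
  fun_prop

lemma exists_isMinOn_z_eq_mu (r : ℝ) :
    ∃ x ∈ Icc (1 - 1 / √2) 1, IsMinOn (z r) (Icc (1 - 1 / √2) 1) x ∧ mu r = z r x := by
  have hne : (Icc (1 - 1 / √2) 1).Nonempty := nonempty_Icc.mpr (sub_le_self _ (by positivity))
  obtain ⟨x, hx, hmin⟩ := isCompact_Icc.exists_isMinOn hne (continuous_z r).continuousOn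
  exact ⟨x, hx, hmin, IsLeast.csInf_eq ⟨mem_image_of_mem _ hx, forall_mem_image.2 hmin⟩⟩

lemma sq_z_one : (fun y ↦ z 1 y ^ 2) =
    fun y ↦ y ^ 2 + (1 - y - √(1 - (2 - y - √(2 * y - y ^ 2)) ^ 2)) ^ 2 := by
  funext y
  rw [z, sq_sqrt (by positivity)]
  norm_num

lemma hasDerivAt_sq_z_one {x s u : ℝ} (hs : √(2 * x - x ^ 2) = s) (hs0 : s ≠ 0)
    (hu : √(1 - (2 - x - s) ^ 2) = u) (hu0 : u ≠ 0) :
    HasDerivAt (fun y ↦ z 1 y ^ 2)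
      (2 * x - 2 * (1 - x - u) * (1 + (2 - x - s) * (1 + (1 - x) / s) / u)) x := by
  have hS : HasDerivAt (fun y ↦ 2 * y - y ^ 2) (2 - 2 * x) x :=
    (((hasDerivAt_id' x).const_mul 2).fun_sub ((hasDerivAt_id' x).fun_pow 2)).congr_deriv (by ring)
  have hsd : HasDerivAt (fun y ↦ √(2 * y - y ^ 2)) ((1 - x) / s) x :=
    (hS.sqrt (sqrt_ne_zero'.mp (hs ▸ hs0)).ne').congr_deriv (by rw [hs]; field_simp)
  have htd : HasDerivAt (fun y ↦ 2 - y - √(2 * y - y ^ 2)) (-(1 + (1 - x) / s)) x :=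
    (((hasDerivAt_id' x).const_sub 2).fun_sub hsd).congr_deriv (by ring)
  have hud : HasDerivAt (fun y ↦ √(1 - (2 - y - √(2 * y - y ^ 2)) ^ 2))
      ((2 - x - s) * (1 + (1 - x) / s) / u) x :=
    (((htd.fun_pow 2).const_sub 1).sqrt
      (by rw [hs]; exact (sqrt_ne_zero'.mp (hu ▸ hu0)).ne')).congr_deriv
      (by rw [hs, hu]; field_simp; ring)
  rw [sq_z_one]
  exact (((hasDerivAt_id' x).fun_pow 2).fun_add
    ((((hasDerivAt_id' x).const_sub 1).fun_sub hud).fun_pow 2)).congr_deriv (by rw [hs, hu]; ring)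

-- Isolating `u` and squaring, then isolating `s` and squaring, in the critical-point equation
-- `x s u = (1 - x - u) (s u + (2 - x - s)(s + 1 - x))` of `z 1` gives this polynomial in `x`.
noncomputable def morikawaPoly : ℚ[X] :=
  512 * X ^ 10 - 6144 * X ^ 9 + 32000 * X ^ 8 - 94272 * X ^ 7 + 171752 * X ^ 6 - 199224 * X ^ 5
    + 146800 * X ^ 4 - 67296 * X ^ 3 + 18688 * X ^ 2 - 3072 * X + 256

lemma morikawaPoly_ne_zero : morikawaPoly ≠ 0 := fun h ↦ by
  simpa [morikawaPoly] using congrArg (eval 0) h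

lemma aeval_morikawaPoly_eq_zero {x s u : ℝ} (hs : s ^ 2 = 2 * x - x ^ 2)
    (hu : u ^ 2 = 1 - (2 - x - s) ^ 2)
    (hcrit : x * s * u = (1 - x - u) * (s * u + (2 - x - s) * (s + 1 - x))) :
    aeval x morikawaPoly = 0 := by
  set A := 2 - s ^ 2 - 3 * x + 2 * x * s + x ^ 2
  set B := -2 - 4 * s + 5 * s ^ 2 - s ^ 3 + 5 * x + 5 * x * s - 3 * x * s ^ 2 - 4 * x ^ 2
    - x ^ 2 * s + x ^ 3
  have hu_lin : A * u + B = 0 := by linear_combination hcrit - s * hu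
  have hu_free : B ^ 2 - A ^ 2 * (1 - (2 - x - s) ^ 2) = 0 := by
    linear_combination (B - A * u) * hu_lin + A ^ 2 * hu
  set P := -20 * x - 38 * x ^ 2 + 56 * x ^ 3 - 16 * x ^ 4
  set Q := 16 - 96 * x + 296 * x ^ 2 - 302 * x ^ 3 + 120 * x ^ 4 - 16 * x ^ 5
  have hs_lin : P * s + Q = 0 := by
    linear_combination hu_free - (-12 - 20 * s + 32 * s ^ 2 - 14 * s ^ 3 + 2 * s ^ 4 + 76 * x
      - 18 * x * s ^ 2 + 4 * x * s ^ 3 - 50 * x ^ 2 - 2 * x ^ 2 * s + 4 * x ^ 2 * s ^ 2 + 2 * x ^ 3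
      + 4 * x ^ 3 * s + 2 * x ^ 4) * hs
  simp only [morikawaPoly, map_add, map_sub, map_mul, map_pow, map_ofNat, aeval_X]
  linear_combination (Q - P * s) * hs_lin + P ^ 2 * hs

lemma sq_two_sub_sub_sqrt_lt_one {x : ℝ} (hx : x ∈ Ioo (1 - 1 / √2) 1) :
    (2 - x - √(2 * x - x ^ 2)) ^ 2 < 1 := by
  obtain ⟨hxl, hxr⟩ := hx
  have hc : (1 - x) ^ 2 < 1 / 2 := by
    have : 1 - x < 1 / √2 := by linarith
    calc (1 - x) ^ 2 < (1 / √2) ^ 2 := by gcongr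
      _ = 1 / 2 := by rw [div_pow, sq_sqrt zero_le_two, one_pow]
  have hs : √(2 * x - x ^ 2) ^ 2 = 1 - (1 - x) ^ 2 := by
    rw [sq_sqrt (by nlinarith)]
    ring
  have hlt : 1 - x < √(2 * x - x ^ 2) := by nlinarith [sqrt_nonneg (2 * x - x ^ 2)]
  have hle : √(2 * x - x ^ 2) ≤ 1 := by nlinarith [sqrt_nonneg (2 * x - x ^ 2)]
  nlinarith

lemma isAlgebraic_of_isLocalMin_z_one {x : ℝ} (hx : x ∈ Ioo (1 - 1 / √2) 1)
    (hmin : IsLocalMin (z 1) x) : IsAlgebraic ℚ x := by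
  have hx0 : 0 < x := lt_trans (sub_pos.2 ((div_lt_one (by positivity)).2 one_lt_sqrt_two)) hx.1
  have hS : 0 < 2 * x - x ^ 2 := by nlinarith [hx.2]
  have hU : 0 < 1 - (2 - x - √(2 * x - x ^ 2)) ^ 2 := by
    linarith [sq_two_sub_sub_sqrt_lt_one hx]
  have hsq : IsLocalMin (fun y ↦ z 1 y ^ 2) x :=
    Filter.Eventually.mono hmin fun y hy ↦ pow_le_pow_left₀ (sqrt_nonneg _) hy 2
  have hs0 := sqrt_pos.2 hS
  have hu0 := sqrt_pos.2 hU
  have hcrit := hsq.hasDerivAt_eq_zero (hasDerivAt_sq_z_one rfl hs0.ne' rfl hu0.ne')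
  refine ⟨morikawaPoly, morikawaPoly_ne_zero,
    aeval_morikawaPoly_eq_zero (sq_sqrt hS.le) (sq_sqrt hU.le) ?_⟩
  generalize √(1 - (2 - x - √(2 * x - x ^ 2)) ^ 2) = u at hu0 hcrit ⊢
  generalize √(2 * x - x ^ 2) = s at hs0 hcrit ⊢
  field_simp at hcrit
  linear_combination hcrit / 2

lemma isAlgebraic_of_isMinOn_z_one {x : ℝ} (hx : x ∈ Icc (1 - 1 / √2) 1)
    (hmin : IsMinOn (z 1) (Icc (1 - 1 / √2) 1) x) : IsAlgebraic ℚ x := by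
  rcases hx.1.eq_or_lt with rfl | hxl
  · rw [one_div]
    exact isAlgebraic_one.sub (isAlgebraic_ofNat 2).real_sqrt.inv
  rcases hx.2.eq_or_lt with rfl | hxr
  · exact isAlgebraic_one
  exact isAlgebraic_of_isLocalMin_z_one ⟨hxl, hxr⟩ (hmin.isLocalMin (Icc_mem_nhds hxl hxr))

theorem morikawa_mu_one_algebraic :
    IsAlgebraic ℚ (mu 1) ∧ IsAlgebraic ℚ (lam 1) := by
  obtain ⟨x, hx, hmin, hmu⟩ := exists_isMinOn_z_eq_mu 1
  have hmu_alg : IsAlgebraic ℚ (mu 1) :=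
    hmu ▸ isAlgebraic_z isAlgebraic_one (isAlgebraic_of_isMinOn_z_one hx hmin)
  exact ⟨hmu_alg, by simpa [lam] using hmu_alg.pow 2⟩
end
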